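/- arXiv:1306.5255 — 2 statements merged into one kernel-verified Lean document; each statement's English description precedes it below -/
import Mathlib

section
/- Let A ⊆ C be an alcove and let H be a wall of A that is not a wall of the chamber C. Let B be an alcove and let v ∈ closure(B). If A and the base alcove A₀ lie in the same open half-space determined by H, and v ∈ closure(−C), then B lies in the same open half-space of H as A. -/
open RealInnerProductSpace

/-- A finite, reduced, irreducible, crystallographic root system spanning `V`,
together with a regular vector `ξ` determining the positive system. -/
structure RootSystemData (V : Type*) [NormedAddCommGroup V] [InnerProductSpace ℝ V] where
  Φ : Set V
  ξ : V
  finite : Φ.Finite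
  nonzero : ∀ α ∈ Φ, α ≠ 0
  reduced : ∀ α ∈ Φ, ∀ c : ℝ, c • α ∈ Φ → c = 1 ∨ c = -1
  crystallographic : ∀ α ∈ Φ, ∀ β ∈ Φ, ∃ n : ℤ, 2 * ⟪β, α⟫ / ⟪α, α⟫ = (n : ℝ)
  reflect_mem : ∀ α ∈ Φ, ∀ β ∈ Φ, β - (2 * ⟪β, α⟫ / ⟪α, α⟫) • α ∈ Φ
  spans : Submodule.span ℝ Φ = ⊤
  irreducible : ∀ Φ₁ Φ₂ : Set V, Φ = Φ₁ ∪ Φ₂ →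
    (∀ a ∈ Φ₁, ∀ b ∈ Φ₂, ⟪a, b⟫ = (0 : ℝ)) → Φ₁ = ∅ ∨ Φ₂ = ∅
  regular : ∀ α ∈ Φ, ⟪ξ, α⟫ ≠ (0 : ℝ)

/-- The affine orthogonal reflection of `V` fixing the hyperplane `{x | ⟪x, α⟫ = k}` pointwise. -/
noncomputable def reflPt {V : Type*} [NormedAddCommGroup V] [InnerProductSpace ℝ V]
    (α : V) (k : ℝ) (x : V) : V := x - ((⟪x, α⟫ - k) * (2 / ⟪α, α⟫)) • α

namespace RootSystemData

variable {V : Type*} [NormedAddCommGroup V] [InnerProductSpace ℝ V]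

/-- The positive system `Φ⁺` determined by `ξ`. -/
def pos (R : RootSystemData V) : Set V := {α | α ∈ R.Φ ∧ 0 < ⟪R.ξ, α⟫}

/-- The open dominant Weyl chamber `C`. -/
def chamber (R : RootSystemData V) : Set V := {x | ∀ α ∈ R.pos, 0 < ⟪x, α⟫}

/-- The opposite chamber `−C`. -/
def antiChamber (R : RootSystemData V) : Set V := {x | -x ∈ R.chamber}

/-- The affine root hyperplane `H_{α,k}`. -/
def hyp (R : RootSystemData V) (α : V) (k : ℤ) : Set V := {x | ⟪x, α⟫ = (k : ℝ)}

/-- `H` is an affine root hyperplane. -/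
def IsHyp (R : RootSystemData V) (H : Set V) : Prop := ∃ α ∈ R.Φ, ∃ k : ℤ, H = R.hyp α k

/-- The union of all affine root hyperplanes. -/
def hypUnion (R : RootSystemData V) : Set V := {x | ∃ α ∈ R.Φ, ∃ k : ℤ, ⟪x, α⟫ = (k : ℝ)}

/-- An alcove: a connected component of the complement of the union of the affine root
hyperplanes. -/
def IsAlcove (R : RootSystemData V) (A : Set V) : Prop :=
  ∃ x ∈ R.hypUnionᶜ, A = connectedComponentIn R.hypUnionᶜ x

/-- The base alcove `A₀`. -/
def baseAlcove (R : RootSystemData V) : Set V :=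
  {x | ∀ α ∈ R.pos, 0 < ⟪x, α⟫ ∧ ⟪x, α⟫ < 1}

/-- The sets `A` and `B` lie in the same open half-space determined by the affine root
hyperplane `H`. -/
def SameSide (R : RootSystemData V) (H A B : Set V) : Prop :=
  ∃ α ∈ R.Φ, ∃ k : ℤ, H = R.hyp α k ∧
    ((∀ x ∈ A ∪ B, ⟪x, α⟫ < (k : ℝ)) ∨ (∀ x ∈ A ∪ B, (k : ℝ) < ⟪x, α⟫))

/-- The affine root hyperplane `H` separates `A` and `B`: they lie in the two different open
half-spaces determined by `H`. -/
def Separates (R : RootSystemData V) (H A B : Set V) : Prop :=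
  ∃ α ∈ R.Φ, ∃ k : ℤ, H = R.hyp α k ∧
    (((∀ x ∈ A, ⟪x, α⟫ < (k : ℝ)) ∧ (∀ x ∈ B, (k : ℝ) < ⟪x, α⟫)) ∨
     ((∀ x ∈ B, ⟪x, α⟫ < (k : ℝ)) ∧ (∀ x ∈ A, (k : ℝ) < ⟪x, α⟫)))

/-- `d(A, B)`: the number of affine root hyperplanes separating `A` from `B`. -/
noncomputable def dist (R : RootSystemData V) (A B : Set V) : ℕ :=
  {H : Set V | R.IsHyp H ∧ R.Separates H A B}.ncard

/-- Two alcoves are adjacent. -/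
def Adjacent (R : RootSystemData V) (A B : Set V) : Prop := A ≠ B ∧ R.dist A B = 1

/-- `H` is a wall of the alcove `A`: it is an affine root hyperplane with
`d(A, r_H(A)) = 1`. -/
def IsWall (R : RootSystemData V) (H A : Set V) : Prop :=
  ∃ α ∈ R.Φ, ∃ k : ℤ, H = R.hyp α k ∧ R.dist A (reflPt α (k : ℝ) '' A) = 1

/-- `H` is a wall of the dominant chamber `C`: `H ∩ C = ∅` and `H ∩ closure C` affinely
spans `H`. -/
def IsChamberWall (R : RootSystemData V) (H : Set V) : Prop :=
  R.IsHyp H ∧ H ∩ R.chamber = ∅ ∧ affineSpan ℝ (H ∩ closure R.chamber) = affineSpan ℝ H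

/-- A special point of `V`. -/
def IsSpecial (R : RootSystemData V) (v : V) : Prop := ∀ α ∈ R.Φ, ∃ n : ℤ, ⟪v, α⟫ = (n : ℝ)

/-- The finite Weyl group `W₀`: the group of linear isometries of `V` generated by the
reflections in the hyperplanes `H_{α,0}`, `α ∈ Φ`. -/
def W0 (R : RootSystemData V) : Subgroup (V ≃ₗᵢ[ℝ] V) :=
  Subgroup.closure {f | ∃ α ∈ R.Φ, ∀ x, f x = reflPt α 0 x}

/-- A finite gallery `(Bs 0, …, Bs n)`: consecutive alcoves are adjacent. -/
def IsGallery (R : RootSystemData V) (Bs : ℕ → Set V) (n : ℕ) : Prop :=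
  (∀ i ≤ n, R.IsAlcove (Bs i)) ∧ ∀ i < n, R.Adjacent (Bs i) (Bs (i + 1))

/-- The Umbrella property for a gallery `(Bs 0, …, Bs n)`, an alcove `A` and a wall `H`
of `A`: every alcove of the gallery is on the same side of `H` as `A`, and the gallery can
be extended to a minimal gallery from `Bs 0` to `A`. -/
def Umbrella (R : RootSystemData V) (Bs : ℕ → Set V) (n : ℕ) (A H : Set V) : Prop :=
  R.IsWall H A ∧ (∀ i ≤ n, R.SameSide H (Bs i) A) ∧
    ∃ m, n ≤ m ∧ ∃ Cs : ℕ → Set V, (∀ i ≤ n, Cs i = Bs i) ∧ Cs m = A ∧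
      R.IsGallery Cs m ∧ R.dist (Cs 0) (Cs m) = m

/-- The length of an invertible affine transformation: `ℓ(g) = d(A₀, g(A₀))`. -/
noncomputable def len (R : RootSystemData V) (g : V ≃ᵃ[ℝ] V) : ℕ :=
  R.dist R.baseAlcove (⇑g '' R.baseAlcove)

/-- `g` is a translation of `V`. -/
def IsTranslation (g : V ≃ᵃ[ℝ] V) : Prop := ∃ v : V, ∀ x, g x = x + v

/-- `s ∈ S_aff`: `s` is the reflection in an affine root hyperplane which is a wall of the
base alcove `A₀`. -/
def IsSimpleRefl (R : RootSystemData V) (s : V ≃ᵃ[ℝ] V) : Prop :=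
  ∃ α ∈ R.Φ, ∃ k : ℤ, R.IsWall (R.hyp α k) R.baseAlcove ∧ ∀ x, s x = reflPt α (k : ℝ) x

end RootSystemData

/-- The sequence of iterated conjugates `g, s₁gs₁, s₂s₁gs₁s₂, …`. -/
noncomputable def conjSeq {V : Type*} [NormedAddCommGroup V] [InnerProductSpace ℝ V]
    (g : V ≃ᵃ[ℝ] V) (ss : ℕ → V ≃ᵃ[ℝ] V) : ℕ → V ≃ᵃ[ℝ] V
  | 0 => g
  | n + 1 => ss n * conjSeq g ss n * ss n

namespace RootSystemData

variable {V : Type*} [NormedAddCommGroup V] [InnerProductSpace ℝ V]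

/-- The Diamond Property for `g`: a sequence of length-preserving conjugations by simple
reflections leads to an element `g′` admitting a simple reflection `s` with
`ℓ(sg′) > ℓ(g′)`, `ℓ(g′s) > ℓ(g′)` and `sg′s ≠ g′`. -/
def DiamondProperty (R : RootSystemData V) (g : V ≃ᵃ[ℝ] V) : Prop :=
  ∃ (n : ℕ) (ss : ℕ → V ≃ᵃ[ℝ] V), (∀ i < n, R.IsSimpleRefl (ss i)) ∧
    (∀ i < n, R.len (conjSeq g ss (i + 1)) = R.len g) ∧
    ∃ s : V ≃ᵃ[ℝ] V, R.IsSimpleRefl s ∧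
      R.len (s * conjSeq g ss n) > R.len (conjSeq g ss n) ∧
      R.len (conjSeq g ss n * s) > R.len (conjSeq g ss n) ∧
      s * conjSeq g ss n * s ≠ conjSeq g ss n

end RootSystemData

/-! Write `H = H_{α,k}` with `α` positive. As `H` is a wall of `A`, the alcove `A` lies in the
strip `k - 1 < ⟪·, α⟫ < k` or in the strip `k < ⟪·, α⟫ < k + 1`.

In the first case `A₀` lies below `H` too, so `k ≥ 1`, while `B` touches
`closure (−C) ⊆ {⟪·, α⟫ ≤ 0}` and therefore lies below `H_{α,1}`.

In the second case `A₀` lies above `H`, which forces `k = 0`. But a wall `H_{α,0}` of an alcove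
`A ⊆ C` is a wall of `C`: the orthogonal projection onto `H_{α,0}` of a point `a ∈ A` is the
midpoint of `a` and its mirror image, so a positive root `β` negative on it would make `H_{β,0}` a
second hyperplane separating `A` from its mirror image; and since `A` is open, these projections
span `H_{α,0}`. -/

namespace RootSystemData

variable {V : Type*} [NormedAddCommGroup V] [InnerProductSpace ℝ V]

lemma inner_reflPt (α : V) (k : ℝ) (x β : V) :
    ⟪reflPt α k x, β⟫ = ⟪x, β⟫ - ((⟪x, α⟫ - k) * (2 / ⟪α, α⟫)) * ⟪α, β⟫ := by
  simp [reflPt, inner_sub_left, real_inner_smul_left]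

lemma inner_reflPt_self {α : V} (hα : α ≠ 0) (k : ℝ) (x : V) :
    ⟪reflPt α k x, α⟫ = 2 * k - ⟪x, α⟫ := by
  have : ⟪α, α⟫ ≠ (0 : ℝ) := inner_self_ne_zero.mpr hα
  rw [inner_reflPt]
  field_simp
  ring

lemma reflPt_neg (α : V) (k : ℝ) : reflPt (-α) (-k) = reflPt α k := by
  ext x
  simp only [reflPt, inner_neg_left, inner_neg_right, neg_neg, smul_neg, sub_neg_eq_add]
  rw [sub_eq_add_neg, ← neg_smul]
  congr 2
  ring

lemma continuous_reflPt (α : V) (k : ℝ) : Continuous (reflPt α k) := by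
  unfold reflPt
  fun_prop

lemma inner_div_inner_self_smul {α : V} (hα : α ≠ 0) (t : ℝ) : ⟪(t / ⟪α, α⟫) • α, α⟫ = t := by
  rw [real_inner_smul_left, div_mul_cancel₀ _ (inner_self_ne_zero.mpr hα)]

lemma inner_sub_proj_self {α : V} (hα : α ≠ 0) (a : V) :
    ⟪a - (⟪a, α⟫ / ⟪α, α⟫) • α, α⟫ = 0 := by
  rw [inner_sub_left, inner_div_inner_self_smul hα, sub_self]

variable (R : RootSystemData V)

lemma neg_mem {α : V} (hα : α ∈ R.Φ) : -α ∈ R.Φ := by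
  have h := R.reflect_mem α hα α hα
  rwa [mul_div_cancel_right₀ _ (inner_self_ne_zero.mpr (R.nonzero α hα)), two_smul,
    sub_add_cancel_left] at h

lemma hyp_neg (α : V) (k : ℤ) : R.hyp (-α) (-k) = R.hyp α k := by
  ext x
  simp only [hyp, Set.mem_ofPred_eq, inner_neg_right, Int.cast_neg, neg_inj]

variable {R}

lemma hyp_injective {α : V} (hα : α ∈ R.Φ) {j k : ℤ} (h : R.hyp α j = R.hyp α k) : j = k := by
  have hk : ((k : ℝ) / ⟪α, α⟫) • α ∈ R.hyp α k := inner_div_inner_self_smul (R.nonzero α hα) _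
  rw [← h] at hk
  have : (k : ℝ) = j := (inner_div_inner_self_smul (R.nonzero α hα) _).symm.trans hk
  exact_mod_cast this.symm

lemma hyp_eq_hyp {α β : V} (hα : α ∈ R.Φ) (hβ : β ∈ R.Φ) {j k : ℤ}
    (h : R.hyp β j = R.hyp α k) : (β = α ∧ j = k) ∨ (β = -α ∧ j = -k) := by
  have hα0 := R.nonzero α hα
  set p : V := ((k : ℝ) / ⟪α, α⟫) • α
  have hpα : ⟪p, α⟫ = k := inner_div_inner_self_smul hα0 _
  have hpβ : ⟪p, β⟫ = j := (h ▸ hpα : p ∈ R.hyp β j)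
  set c : ℝ := ⟪β, α⟫ / ⟪α, α⟫
  set w : V := β - c • α
  have hwα : ⟪w, α⟫ = 0 := inner_sub_proj_self hα0 β
  have hwβ : ⟪w, β⟫ = 0 := by
    have : p + w ∈ R.hyp β j := by
      rw [h]
      show ⟪p + w, α⟫ = k
      rw [inner_add_left, hpα, hwα, add_zero]
    have : ⟪p + w, β⟫ = j := this
    rwa [inner_add_left, hpβ, add_eq_left] at this
  have hβc : β = c • α := by
    have : ⟪w, w⟫ = (0 : ℝ) := by
      rw [inner_sub_right, real_inner_smul_right, hwβ, hwα, mul_zero, sub_zero]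
    exact sub_eq_zero.mp (inner_self_eq_zero.mp this)
  have hjk : (j : ℝ) = c * k := by
    rw [← hpβ, ← hpα, hβc, real_inner_smul_right]
  rcases R.reduced α hα c (hβc ▸ hβ) with hc | hc
  · rw [hc, one_smul] at hβc
    rw [hc, one_mul] at hjk
    exact Or.inl ⟨hβc, by exact_mod_cast hjk⟩
  · rw [hc, neg_one_smul] at hβc
    rw [hc, neg_one_mul] at hjk
    exact Or.inr ⟨hβc, by exact_mod_cast hjk⟩

lemma sameSide_hyp_iff {α : V} (hα : α ∈ R.Φ) {k : ℤ} {S T : Set V} :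
    R.SameSide (R.hyp α k) S T ↔
      (∀ x ∈ S ∪ T, ⟪x, α⟫ < k) ∨ (∀ x ∈ S ∪ T, k < ⟪x, α⟫) := by
  refine ⟨?_, fun h => ⟨α, hα, k, rfl, h⟩⟩
  rintro ⟨β, hβ, j, hH, hside⟩
  rcases hyp_eq_hyp hα hβ hH.symm with ⟨rfl, rfl⟩ | ⟨rfl, rfl⟩
  · exact hside
  · simp only [inner_neg_right, Int.cast_neg, neg_lt_neg_iff] at hside
    exact hside.symm

lemma _root_.IsPreconnected.exists_int_subset_Ioo {T : Set ℝ} (hT : IsPreconnected T)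
    (hint : ∀ n : ℤ, (n : ℝ) ∉ T) : ∃ m : ℤ, T ⊆ Set.Ioo (m : ℝ) (m + 1) := by
  rcases T.eq_empty_or_nonempty with rfl | ⟨t₀, ht₀⟩
  · exact ⟨0, Set.empty_subset _⟩
  have hfloor : (⌊t₀⌋ : ℝ) < t₀ := (Int.floor_le t₀).lt_of_ne fun h => hint _ (h ▸ ht₀)
  refine ⟨⌊t₀⌋, fun t ht => ⟨?_, ?_⟩⟩
  · by_contra! h
    exact hint _ (hT.ordConnected.out ht ht₀ ⟨h, hfloor.le⟩)
  · by_contra! h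
    exact hint (⌊t₀⌋ + 1) (hT.ordConnected.out ht₀ ht
      ⟨by push_cast; exact (Int.lt_floor_add_one t₀).le, by push_cast; exact h⟩)

variable (R) in
lemma isOpen_hypUnion_compl : IsOpen R.hypUnionᶜ := by
  have : R.hypUnion = ⋃ α ∈ R.Φ, (fun x : V => ⟪x, α⟫) ⁻¹' Set.range ((↑) : ℤ → ℝ) := by
    ext x
    simp [hypUnion, eq_comm]
  rw [isOpen_compl_iff, this]
  exact R.finite.isClosed_biUnion fun α _ =>
    Int.isClosedEmbedding_coe_real.isClosed_range.preimage (continuous_id.inner continuous_const)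

lemma exists_strip {S : Set V} (hS : IsPreconnected S) (hsub : S ⊆ R.hypUnionᶜ) {α : V}
    (hα : α ∈ R.Φ) : ∃ m : ℤ, ∀ x ∈ S, m < ⟪x, α⟫ ∧ ⟪x, α⟫ < m + 1 := by
  have himage : IsPreconnected ((fun x => ⟪x, α⟫) '' S) :=
    hS.image _ (continuous_id.inner continuous_const).continuousOn
  obtain ⟨m, hm⟩ := himage.exists_int_subset_Ioo
    (by rintro n ⟨x, hx, hxn⟩; exact hsub hx ⟨α, hα, n, hxn⟩)
  exact ⟨m, fun x hx => hm ⟨x, hx, rfl⟩⟩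

lemma reflPt_mem_hypUnion_compl {α : V} (hα : α ∈ R.Φ) (k : ℤ) {x : V}
    (hx : x ∈ R.hypUnionᶜ) : reflPt α k x ∈ R.hypUnionᶜ := by
  rintro ⟨β, hβ, j, hj⟩
  obtain ⟨n, hn⟩ := R.crystallographic α hα β hβ
  refine hx ⟨_, R.reflect_mem α hα β hβ, j - k * n, ?_⟩
  rw [inner_reflPt, real_inner_comm β α] at hj
  rw [inner_sub_right, real_inner_smul_right]
  push_cast
  rw [← hn]
  linear_combination hj

namespace IsAlcove

variable {A : Set V} (hA : R.IsAlcove A)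
include hA

lemma subset_hypUnion_compl : A ⊆ R.hypUnionᶜ := by
  obtain ⟨x, _, rfl⟩ := hA
  exact connectedComponentIn_subset _ _

lemma nonempty : A.Nonempty := by
  obtain ⟨x, hx, rfl⟩ := hA
  exact ⟨x, mem_connectedComponentIn hx⟩

lemma isPreconnected : IsPreconnected A := by
  obtain ⟨x, _, rfl⟩ := hA
  exact isPreconnected_connectedComponentIn

lemma isOpen : IsOpen A := by
  obtain ⟨x, _, rfl⟩ := hA
  exact R.isOpen_hypUnion_compl.connectedComponentIn

lemma exists_strip {α : V} (hα : α ∈ R.Φ) :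
    ∃ m : ℤ, ∀ x ∈ A, m < ⟪x, α⟫ ∧ ⟪x, α⟫ < m + 1 :=
  R.exists_strip hA.isPreconnected hA.subset_hypUnion_compl hα

lemma exists_strip_reflPt {α β : V} (hα : α ∈ R.Φ) (k : ℤ) (hβ : β ∈ R.Φ) :
    ∃ m : ℤ, ∀ x ∈ reflPt α k '' A, m < ⟪x, β⟫ ∧ ⟪x, β⟫ < m + 1 :=
  R.exists_strip (hA.isPreconnected.image _ (continuous_reflPt α k).continuousOn)
    (by rintro _ ⟨x, hx, rfl⟩; exact reflPt_mem_hypUnion_compl hα k (hA.subset_hypUnion_compl hx))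
    hβ

end IsAlcove

lemma eq_of_separates_of_dist_eq_one {S T H₁ H₂ : Set V} (hd : R.dist S T = 1)
    (h₁ : R.IsHyp H₁ ∧ R.Separates H₁ S T) (h₂ : R.IsHyp H₂ ∧ R.Separates H₂ S T) : H₁ = H₂ := by
  obtain ⟨H, hH⟩ := Set.ncard_eq_one.mp hd
  have hmem₁ : H₁ ∈ {H | R.IsHyp H ∧ R.Separates H S T} := h₁
  have hmem₂ : H₂ ∈ {H | R.IsHyp H ∧ R.Separates H S T} := h₂
  rw [hH] at hmem₁ hmem₂
  exact hmem₁.trans hmem₂.symm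

lemma IsWall.exists_pos {H A : Set V} (hH : R.IsWall H A) :
    ∃ α ∈ R.pos, ∃ k : ℤ, H = R.hyp α k ∧ R.dist A (reflPt α k '' A) = 1 := by
  obtain ⟨α, hα, k, rfl, hd⟩ := hH
  rcases (R.regular α hα).lt_or_gt with hneg | hpos
  · refine ⟨-α, ⟨R.neg_mem hα, by rwa [inner_neg_right, neg_pos]⟩, -k, (R.hyp_neg α k).symm, ?_⟩
    rwa [Int.cast_neg, reflPt_neg]
  · exact ⟨α, ⟨hα, hpos⟩, k, rfl, hd⟩

lemma strip_eq_of_dist_reflPt_eq_one {A : Set V} {α : V} (hα : α ∈ R.Φ) {k m : ℤ}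
    (hd : R.dist A (reflPt α k '' A) = 1) (hm : ∀ x ∈ A, m < ⟪x, α⟫ ∧ ⟪x, α⟫ < m + 1) :
    m = k - 1 ∨ m = k := by
  have hrefl : ∀ y ∈ reflPt α k '' A, 2 * k - (m + 1) < ⟪y, α⟫ ∧ ⟪y, α⟫ < 2 * k - (m : ℝ) := by
    rintro _ ⟨x, hx, rfl⟩
    rw [inner_reflPt_self (R.nonzero α hα)]
    constructor <;> linarith [hm x hx]
  by_contra! hfar
  have hsep : ∀ j : ℤ, j = k - 1 ∨ j = k + 1 →
      R.IsHyp (R.hyp α j) ∧ R.Separates (R.hyp α j) A (reflPt α k '' A) := by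
    intro j hj
    refine ⟨⟨α, hα, j, rfl⟩, α, hα, j, rfl, ?_⟩
    rcases (by omega : m + 2 ≤ k ∨ k + 1 ≤ m) with h | h
    · have hA : (m : ℝ) + 1 ≤ j := by exact_mod_cast (by omega : m + 1 ≤ j)
      have hr : (j : ℝ) ≤ 2 * k - (m + 1) := by exact_mod_cast (by omega : j ≤ 2 * k - (m + 1))
      exact Or.inl ⟨fun x hx => by linarith [hm x hx], fun y hy => by linarith [hrefl y hy]⟩
    · have hA : (j : ℝ) ≤ m := by exact_mod_cast (by omega : j ≤ m)
      have hr : 2 * k - (m : ℝ) ≤ j := by exact_mod_cast (by omega : 2 * k - m ≤ j)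
      exact Or.inr ⟨fun y hy => by linarith [hrefl y hy], fun x hx => by linarith [hm x hx]⟩
  have := hyp_injective hα
    (eq_of_separates_of_dist_eq_one hd (hsep _ (Or.inl rfl)) (hsep _ (Or.inr rfl)))
  omega

open Filter Topology

lemma tendsto_add_smul_nhdsGT (x y : V) :
    Tendsto (fun t : ℝ => x + t • y) (𝓝[>] 0) (𝓝 x) :=
  ((continuous_const.add (continuous_id.smul continuous_const)).tendsto' 0 x
    (by simp)).mono_left nhdsWithin_le_nhds

variable (R) in
lemma baseAlcove_nonempty : R.baseAlcove.Nonempty := by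
  have hfin : R.pos.Finite := R.finite.subset fun β hβ => hβ.1
  have hev : ∀ᶠ t in 𝓝[>] (0 : ℝ), t • R.ξ ∈ R.baseAlcove := by
    refine hfin.eventually_all.2 fun β hβ => ?_
    simp only [real_inner_smul_left]
    have hsmall : ∀ᶠ t in 𝓝[>] (0 : ℝ), t * ⟪R.ξ, β⟫ < 1 :=
      ((continuous_id.mul continuous_const).tendsto' (0 : ℝ) 0 (zero_mul _)).mono_left
        nhdsWithin_le_nhds |>.eventually (gt_mem_nhds one_pos)
    filter_upwards [self_mem_nhdsWithin, hsmall] with t ht hlt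
    exact ⟨mul_pos ht hβ.2, hlt⟩
  obtain ⟨t, ht⟩ := hev.exists
  exact ⟨_, ht⟩

lemma mem_closure_chamber {x : V} (hx : ∀ β ∈ R.pos, 0 ≤ ⟪x, β⟫) : x ∈ closure R.chamber := by
  refine mem_closure_of_tendsto (tendsto_add_smul_nhdsGT x R.ξ) ?_
  filter_upwards [self_mem_nhdsWithin] with t (ht : 0 < t) β hβ
  rw [inner_add_left, real_inner_smul_left]
  linarith [hx β hβ, mul_pos ht hβ.2]

lemma inner_nonpos_of_mem_closure_antiChamber {β v : V} (hβ : β ∈ R.pos)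
    (hv : v ∈ closure R.antiChamber) : ⟪v, β⟫ ≤ 0 := by
  have hclosed : IsClosed {x : V | ⟪x, β⟫ ≤ 0} := isClosed_le (by fun_prop) continuous_const
  refine closure_minimal (fun x hx => ?_) hclosed hv
  have : 0 < ⟪-x, β⟫ := hx β hβ
  rw [inner_neg_left] at this
  exact (neg_pos.mp this).le

variable {A : Set V} {α : V}

lemma inner_sub_proj_nonneg (hA : R.IsAlcove A) (hAC : A ⊆ R.chamber) (hα : α ∈ R.pos)
    (hd : R.dist A (reflPt α 0 '' A) = 1) {a β : V} (ha : a ∈ A) (hβ : β ∈ R.pos) :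
    0 ≤ ⟪a - (⟪a, α⟫ / ⟪α, α⟫) • α, β⟫ := by
  set p := a - (⟪a, α⟫ / ⟪α, α⟫) • α
  have hα0 := R.nonzero α hα.1
  have hpα : ⟪p, α⟫ = 0 := inner_sub_proj_self hα0 a
  by_contra! hneg
  have hra : ⟪reflPt α 0 a, β⟫ = 2 * ⟪p, β⟫ - ⟪a, β⟫ := by
    rw [inner_reflPt]
    simp only [p, inner_sub_left, real_inner_smul_left]
    ring
  obtain ⟨m, hm⟩ := hA.exists_strip_reflPt hα.1 0 hβ.1
  rw [Int.cast_zero] at hm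
  have hm1 : (m : ℝ) + 1 ≤ 0 := by
    have : (m : ℝ) < 0 := by linarith [(hm _ ⟨a, ha, rfl⟩).1, hAC ha β hβ]
    exact_mod_cast (show m + 1 ≤ 0 by exact_mod_cast this)
  have hsepβ : R.IsHyp (R.hyp β 0) ∧ R.Separates (R.hyp β 0) A (reflPt α 0 '' A) :=
    ⟨⟨β, hβ.1, 0, rfl⟩, β, hβ.1, 0, rfl, Or.inr
      ⟨fun y hy => by push_cast; linarith [hm y hy], fun x hx => by push_cast; exact hAC hx β hβ⟩⟩
  have hsepα : R.IsHyp (R.hyp α 0) ∧ R.Separates (R.hyp α 0) A (reflPt α 0 '' A) := by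
    refine ⟨⟨α, hα.1, 0, rfl⟩, α, hα.1, 0, rfl,
      Or.inr ⟨?_, fun x hx => by push_cast; exact hAC hx α hα⟩⟩
    rintro _ ⟨x, hx, rfl⟩
    rw [inner_reflPt_self hα0]
    push_cast
    linarith [hAC hx α hα]
  have hpβ : p ∈ R.hyp β 0 := by
    rw [← eq_of_separates_of_dist_eq_one hd hsepα hsepβ]
    simpa [hyp] using hpα
  simp only [hyp, Set.mem_ofPred_eq, Int.cast_zero] at hpβ
  exact hneg.ne hpβ

lemma isChamberWall_hyp_zero (hA : R.IsAlcove A) (hAC : A ⊆ R.chamber) (hα : α ∈ R.pos)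
    (hd : R.dist A (reflPt α 0 '' A) = 1) : R.IsChamberWall (R.hyp α 0) := by
  have hα0 := R.nonzero α hα.1
  have hproj : ∀ a ∈ A, a - (⟪a, α⟫ / ⟪α, α⟫) • α ∈ R.hyp α 0 ∩ closure R.chamber := by
    refine fun a ha =>
      ⟨?_, mem_closure_chamber fun β hβ => inner_sub_proj_nonneg hA hAC hα hd ha hβ⟩
    show ⟪_, α⟫ = ((0 : ℤ) : ℝ)
    rw [Int.cast_zero, inner_sub_proj_self hα0]
  refine ⟨⟨α, hα.1, 0, rfl⟩, Set.eq_empty_of_forall_notMem fun x ⟨hx, hxC⟩ => ?_,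
    le_antisymm (affineSpan_mono ℝ Set.inter_subset_left) (affineSpan_le.mpr fun h hh => ?_)⟩
  · simp only [hyp, Set.mem_ofPred_eq, Int.cast_zero] at hx
    exact (hxC α hα).ne' hx
  obtain ⟨a, ha⟩ := hA.nonempty
  set p := a - (⟪a, α⟫ / ⟪α, α⟫) • α
  set u := h - p
  have huα : ⟪u, α⟫ = 0 := by
    simp only [hyp, Set.mem_ofPred_eq, Int.cast_zero] at hh
    rw [inner_sub_left, hh, inner_sub_proj_self hα0, sub_zero]
  obtain ⟨δ, hδ, haδ⟩ : ∃ δ : ℝ, 0 < δ ∧ a + δ • u ∈ A :=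
    (eventually_mem_nhdsWithin.and
      ((tendsto_add_smul_nhdsGT a u).eventually_mem (hA.isOpen.mem_nhds ha))).exists
  have hshift : a + δ • u - (⟪a + δ • u, α⟫ / ⟪α, α⟫) • α = p + δ • u := by
    rw [inner_add_left, real_inner_smul_left, huα, mul_zero, add_zero]
    simp only [p]
    abel
  have hp : p ∈ affineSpan ℝ (R.hyp α 0 ∩ closure R.chamber) :=
    subset_affineSpan ℝ _ (hproj a ha)
  have hmem := (affineSpan ℝ _).smul_vsub_vadd_mem δ⁻¹
    (subset_affineSpan ℝ _ (hshift ▸ hproj _ haδ)) hp hp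
  rwa [vsub_eq_sub, vadd_eq_add, add_sub_cancel_left, smul_smul, inv_mul_cancel₀ hδ.ne', one_smul,
    sub_add_cancel] at hmem

lemma sameSide_of_mem_pos {B : Set V} {v : V} (hA : R.IsAlcove A) (hAC : A ⊆ R.chamber)
    (hα : α ∈ R.pos) {k : ℤ} (hd : R.dist A (reflPt α k '' A) = 1)
    (hHnot : ¬ R.IsChamberWall (R.hyp α k)) (hB : R.IsAlcove B) (hv : v ∈ closure B)
    (hside : R.SameSide (R.hyp α k) A R.baseAlcove) (hvC : v ∈ closure R.antiChamber) :
    R.SameSide (R.hyp α k) B A := by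
  obtain ⟨a, ha⟩ := hA.nonempty
  obtain ⟨x₀, hx₀⟩ := R.baseAlcove_nonempty
  obtain ⟨m, hm⟩ := hA.exists_strip hα.1
  rw [sameSide_hyp_iff hα.1] at hside ⊢
  rcases strip_eq_of_dist_reflPt_eq_one hα.1 hd hm with rfl | hmk
  · push_cast at hm
    have hbelow : ∀ x ∈ A ∪ R.baseAlcove, ⟪x, α⟫ < k :=
      hside.resolve_right fun h => by linarith [h a (Or.inl ha), hm a ha]
    have hk : (1 : ℝ) ≤ k := by
      have : (0 : ℝ) < k := (hx₀ α hα).1.trans (hbelow x₀ (Or.inr hx₀))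
      exact_mod_cast (show 1 ≤ k by exact_mod_cast this)
    obtain ⟨m', hm'⟩ := hB.exists_strip hα.1
    have hvm' : (m' : ℝ) ≤ ⟪v, α⟫ :=
      closure_lt_subset_le (f := fun _ => (m' : ℝ)) (g := fun x => ⟪x, α⟫) continuous_const
        (by fun_prop) (closure_mono (fun x hx => (hm' x hx).1) hv)
    have hv0 := inner_nonpos_of_mem_closure_antiChamber hα hvC
    refine Or.inl fun x hx => hx.elim (fun hxB => ?_) (fun hxA => hbelow x (Or.inl hxA))
    linarith [hm' x hxB]
  · subst m
    have habove : ∀ x ∈ A ∪ R.baseAlcove, k < ⟪x, α⟫ :=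
      hside.resolve_left fun h => by linarith [h a (Or.inl ha), hm a ha]
    have hk : k = 0 := by
      have hlt : (k : ℝ) < 1 := (habove x₀ (Or.inr hx₀)).trans (hx₀ α hα).2
      have hgt : (-1 : ℝ) < k := by linarith [hAC ha α hα, (hm a ha).2]
      have : k < 1 := by exact_mod_cast hlt
      have : -1 < k := by exact_mod_cast hgt
      omega
    subst hk
    exact (hHnot (isChamberWall_hyp_zero hA hAC hα (by simpa using hd))).elim

end RootSystemData

theorem statement1_general {V : Type*} [NormedAddCommGroup V] [InnerProductSpace ℝ V]
    (R : RootSystemData V) (A H B : Set V) (v : V)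
    (hA : R.IsAlcove A) (hAC : A ⊆ R.chamber)
    (hH : R.IsWall H A) (hHnot : ¬ R.IsChamberWall H)
    (hB : R.IsAlcove B) (hv : v ∈ closure B)
    (hside : R.SameSide H A R.baseAlcove)
    (hvC : v ∈ closure R.antiChamber) :
    R.SameSide H B A := by
  obtain ⟨α, hα, k, rfl, hd⟩ := hH.exists_pos
  exact R.sameSide_of_mem_pos hA hAC hα hd hHnot hB hv hside hvC

/-- if the alcove `A ⊆ C` and the base alcove lie in the same open half-space of a
wall `H` of `A` which is not a wall of `C`, and `v ∈ closure B ∩ closure (−C)`, then the alcove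
`B` lies in the same open half-space of `H` as `A`. -/
theorem statement1 {V : Type*} [NormedAddCommGroup V] [InnerProductSpace ℝ V]
    [FiniteDimensional ℝ V] (R : RootSystemData V) (A H B : Set V) (v : V)
    (hA : R.IsAlcove A) (hAC : A ⊆ R.chamber)
    (hH : R.IsWall H A) (hHnot : ¬ R.IsChamberWall H)
    (hB : R.IsAlcove B) (hv : v ∈ closure B)
    (hside : R.SameSide H A R.baseAlcove)
    (hvC : v ∈ closure R.antiChamber) :
    R.SameSide H B A :=
  statement1_general R A H B v hA hAC hH hHnot hB hv hside hvC
end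

section
/- An element h ∈ 𝓗 lies in the center Z(𝓗) if and only if its coefficients satisfy: (i) h_{xτ} = h_{τx} for every x ∈ W̃ and τ ∈ Ω; and (ii) for every x ∈ W̃ and s ∈ S: q(s)·h_{sx} = q(s)·h_{xs} if ℓ(sx) > ℓ(x) and ℓ(xs) > ℓ(x); q(s)·h_{sx} = h_{xs} + (q(s)−1)·h_x if ℓ(sx) > ℓ(x) > ℓ(xs); h_{sx} + (q(s)−1)·h_x = q(s)·h_{xs} if ℓ(sx) < ℓ(x) < ℓ(xs); and h_{sx} = h_{xs} if ℓ(sx) < ℓ(x) and ℓ(xs) < ℓ(x). -/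
section

variable {B W Ω : Type*} [Group W] [Group Ω] {M : CoxeterMatrix B}

/-- The length function on `W̃ = W ⋊ Ω`, extending the Coxeter length of `(W, S)` by
`ℓ(wτ) = ℓ(w)`. -/
noncomputable def extLen (cs : CoxeterSystem M W) {φ : Ω →* MulAut W}
    (x : W ⋊[φ] Ω) : ℕ := cs.length x.left

/-- `x ∈ W̃` is a simple reflection, i.e. an element of `S` viewed inside `W̃`. -/
def IsSimpleElt (cs : CoxeterSystem M W) {φ : Ω →* MulAut W} (x : W ⋊[φ] Ω) : Prop :=
  ∃ i : B, x = SemidirectProduct.inl (cs.simple i)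

/-- The sequence of iterated conjugates `x, s₁xs₁, s₂s₁xs₁s₂, …`. -/
def conjSeqW {φ : Ω →* MulAut W} (x : W ⋊[φ] Ω) (ss : ℕ → W ⋊[φ] Ω) : ℕ → W ⋊[φ] Ω
  | 0 => x
  | n + 1 => ss n * conjSeqW x ss n * ss n

/-- `x` and `x′` are laterally conjugate: `x′` is obtained from `x` by a sequence of
length-preserving conjugations by simple reflections. -/
noncomputable def LaterallyConj (cs : CoxeterSystem M W) {φ : Ω →* MulAut W}
    (x x' : W ⋊[φ] Ω) : Prop :=
  ∃ (n : ℕ) (ss : ℕ → W ⋊[φ] Ω), (∀ i < n, IsSimpleElt cs (ss i)) ∧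
    (∀ i < n, extLen cs (conjSeqW x ss (i + 1)) = extLen cs x) ∧ x' = conjSeqW x ss n

/-- `x` has the Direct Diamond Property. -/
noncomputable def DirectDiamond (cs : CoxeterSystem M W) {φ : Ω →* MulAut W}
    (x : W ⋊[φ] Ω) : Prop :=
  ∃ s : W ⋊[φ] Ω, IsSimpleElt cs s ∧ extLen cs x < extLen cs (s * x) ∧
    extLen cs x < extLen cs (x * s) ∧ s * x * s ≠ x

/-- `x` has the Diamond Property: it is laterally conjugate to an element with the
Direct Diamond Property. -/
noncomputable def Diamond (cs : CoxeterSystem M W) {φ : Ω →* MulAut W}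
    (x : W ⋊[φ] Ω) : Prop :=
  ∃ x' : W ⋊[φ] Ω, LaterallyConj cs x x' ∧ DirectDiamond cs x'

end

/-!
An element is central as soon as it commutes with a basis, and `T_x` is a product of
generators `T_s` (`s ∈ S`) and one `T_τ` (`τ ∈ Ω`) along a reduced expression of `x`. So `h` is
central iff it commutes with every `T_s` and every `T_τ`. Comparing the coefficients of `T_y` in
`T_s h` and `h T_s`, where each side depends only on whether `s` is a left, resp. right, ascent
of `y`, gives the four equations (ii); comparing them in `T_τ h` and `h T_τ` gives (i).
-/

open SemidirectProduct Function

namespace Module.Basis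

variable {ι R A α : Type*} [CommRing R] [Ring A] [Algebra R A] [LinearOrder α]
  (b : Basis ι R A)

/-- `f` acts on the basis `b` as a Hecke generator `T_s` does, with `σ` playing the role of
multiplication by `s` and `ℓ` that of the length. -/
def IsHeckeOperator (ℓ : ι → α) (σ : ι → ι) (c : R) (f : A →ₗ[R] A) : Prop :=
  ∀ i, (ℓ i < ℓ (σ i) → f (b i) = b (σ i)) ∧
    (ℓ (σ i) < ℓ i → f (b i) = (c - 1) • b i + c • b (σ i))

variable {b} {ℓ : ι → α} {σ : ι → ι} {c : R} {f : A →ₗ[R] A}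

theorem IsHeckeOperator.repr_apply_of_lt (hf : b.IsHeckeOperator ℓ σ c f) (hσ : Involutive σ)
    (hℓ : ∀ i, ℓ (σ i) ≠ ℓ i) (m : A) {i : ι} (hi : ℓ i < ℓ (σ i)) :
    b.repr (f m) i = c * b.repr m (σ i) := by
  classical
  suffices (b.coord i).comp f = c • b.coord (σ i) from LinearMap.congr_fun this m
  refine b.ext fun x => ?_
  have hσx : σ x = i ↔ x = σ i := ⟨fun h => h ▸ (hσ x).symm, fun h => h ▸ hσ i⟩
  rcases (hℓ x).lt_or_gt with hx | hx
  · have hxi : x ≠ i := by rintro rfl; exact hx.not_gt hi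
    simp [(hf x).2 hx, Finsupp.single_apply, hxi, hσx]
  · have hxi : x ≠ σ i := by rintro rfl; rw [hσ] at hx; exact hx.not_gt hi
    simp [(hf x).1 hx, hxi, hσx]

theorem IsHeckeOperator.repr_apply_of_gt (hf : b.IsHeckeOperator ℓ σ c f) (hσ : Involutive σ)
    (hℓ : ∀ i, ℓ (σ i) ≠ ℓ i) (m : A) {i : ι} (hi : ℓ (σ i) < ℓ i) :
    b.repr (f m) i = b.repr m (σ i) + (c - 1) * b.repr m i := by
  classical
  suffices (b.coord i).comp f = b.coord (σ i) + (c - 1) • b.coord i from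
    LinearMap.congr_fun this m
  refine b.ext fun x => ?_
  have hσx : σ x = i ↔ x = σ i := ⟨fun h => h ▸ (hσ x).symm, fun h => h ▸ hσ i⟩
  rcases (hℓ x).lt_or_gt with hx | hx
  · have hxi : x ≠ σ i := by rintro rfl; rw [hσ] at hx; exact hx.not_gt hi
    rcases eq_or_ne x i with rfl | hx'
    · simp [(hf x).2 hx, hxi.symm]
    · simp [(hf x).2 hx, hxi, hσx, hx']
  · have hxi : x ≠ i := by rintro rfl; exact hx.not_gt hi
    simp [(hf x).1 hx, Finsupp.single_apply, hxi, hσx]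

theorem commute_iff_of_isHeckeOperator {ρ : ι → ι} {a : A}
    (hl : b.IsHeckeOperator ℓ σ c (LinearMap.mulLeft R a)) (hσ : Involutive σ)
    (hℓσ : ∀ i, ℓ (σ i) ≠ ℓ i)
    (hr : b.IsHeckeOperator ℓ ρ c (LinearMap.mulRight R a)) (hρ : Involutive ρ)
    (hℓρ : ∀ i, ℓ (ρ i) ≠ ℓ i) (m : A) :
    Commute a m ↔ ∀ i,
      (ℓ i < ℓ (σ i) ∧ ℓ i < ℓ (ρ i) → c * b.repr m (σ i) = c * b.repr m (ρ i)) ∧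
      (ℓ (ρ i) < ℓ i ∧ ℓ i < ℓ (σ i) →
        c * b.repr m (σ i) = b.repr m (ρ i) + (c - 1) * b.repr m i) ∧
      (ℓ (σ i) < ℓ i ∧ ℓ i < ℓ (ρ i) →
        b.repr m (σ i) + (c - 1) * b.repr m i = c * b.repr m (ρ i)) ∧
      (ℓ (σ i) < ℓ i ∧ ℓ (ρ i) < ℓ i → b.repr m (σ i) = b.repr m (ρ i)) := by
  refine b.ext_elem_iff.trans (forall_congr' fun i => ?_)
  have hleft := hl.repr_apply_of_lt hσ hℓσ m (i := i)
  have hleft' := hl.repr_apply_of_gt hσ hℓσ m (i := i)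
  have hright := hr.repr_apply_of_lt hρ hℓρ m (i := i)
  have hright' := hr.repr_apply_of_gt hρ hℓρ m (i := i)
  simp only [LinearMap.mulLeft_apply, LinearMap.mulRight_apply] at hleft hleft' hright hright'
  rcases (hℓσ i).lt_or_gt with hσi | hσi <;> rcases (hℓρ i).lt_or_gt with hρi | hρi <;>
    simp [hleft, hleft', hright, hright', hσi, hρi, hσi.not_gt, hρi.not_gt]

theorem repr_mul_left_of_mul_basis [Group ι] {g : ι} {a : A} (ha : ∀ i, a * b i = b (g * i))
    (m : A) (i : ι) : b.repr (a * m) i = b.repr m (g⁻¹ * i) := by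
  classical
  suffices (b.coord i).comp (LinearMap.mulLeft R a) = b.coord (g⁻¹ * i) from
    LinearMap.congr_fun this m
  refine b.ext fun x => ?_
  simp [ha, Finsupp.single_apply, eq_inv_mul_iff_mul_eq]

theorem repr_mul_right_of_mul_basis [Group ι] {g : ι} {a : A} (ha : ∀ i, b i * a = b (i * g))
    (m : A) (i : ι) : b.repr (m * a) i = b.repr m (i * g⁻¹) := by
  classical
  suffices (b.coord i).comp (LinearMap.mulRight R a) = b.coord (i * g⁻¹) from
    LinearMap.congr_fun this m
  refine b.ext fun x => ?_
  simp [ha, Finsupp.single_apply, eq_mul_inv_iff_mul_eq]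

theorem commute_iff_of_mul_basis [Group ι] {g : ι} {a : A} (hl : ∀ i, a * b i = b (g * i))
    (hr : ∀ i, b i * a = b (i * g)) (m : A) :
    Commute a m ↔ ∀ i, b.repr m (i * g) = b.repr m (g * i) := by
  rw [Commute, SemiconjBy, b.ext_elem_iff]
  simp only [repr_mul_left_of_mul_basis hl, repr_mul_right_of_mul_basis hr]
  refine ⟨fun h i => ?_, fun h i => ?_⟩
  · simpa [mul_assoc] using h (g * i * g)
  · simpa [mul_assoc] using h (g⁻¹ * i * g⁻¹)

theorem mem_center_of_commute (m : A) (hm : ∀ i, Commute (b i) m) : m ∈ Set.center A := by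
  have : LinearMap.mulRight R m = LinearMap.mulLeft R m := b.ext hm
  exact Semigroup.mem_center_iff.mpr fun x => LinearMap.congr_fun this x

end Module.Basis

section Coxeter

variable {B W Ω : Type*} [Group W] [Group Ω] {M : CoxeterMatrix B} {cs : CoxeterSystem M W}
  {φ : Ω →* MulAut W}

theorem IsSimpleElt.mul_self {s : W ⋊[φ] Ω} (hs : IsSimpleElt cs s) : s * s = 1 := by
  obtain ⟨i, rfl⟩ := hs
  rw [← map_mul, cs.simple_mul_simple_self, map_one]

theorem IsSimpleElt.involutive_mul_left {s : W ⋊[φ] Ω} (hs : IsSimpleElt cs s) :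
    Involutive (s * ·) := fun x => show s * (s * x) = x by rw [← mul_assoc, hs.mul_self, one_mul]

theorem IsSimpleElt.involutive_mul_right {s : W ⋊[φ] Ω} (hs : IsSimpleElt cs s) :
    Involutive (· * s) := fun x => show x * s * s = x by rw [mul_assoc, hs.mul_self, mul_one]

variable (cs)

theorem extLen_simple_mul_ne {s : W ⋊[φ] Ω} (hs : IsSimpleElt cs s) (x : W ⋊[φ] Ω) :
    extLen cs (s * x) ≠ extLen cs x := by
  obtain ⟨i, rfl⟩ := hs
  simpa [extLen] using cs.length_simple_mul_ne x.left i

theorem extLen_mul_simple_ne (hφ : ∀ (τ : Ω) (i : B), ∃ j : B, φ τ (cs.simple i) = cs.simple j)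
    {s : W ⋊[φ] Ω} (hs : IsSimpleElt cs s) (x : W ⋊[φ] Ω) :
    extLen cs (x * s) ≠ extLen cs x := by
  obtain ⟨i, rfl⟩ := hs
  obtain ⟨j, hj⟩ := hφ x.right i
  simpa [extLen, hj] using cs.length_mul_simple_ne x.left j

theorem eq_inr_of_extLen_eq_zero {x : W ⋊[φ] Ω} (hx : extLen cs x = 0) : x = inr x.right := by
  conv_lhs => rw [← inl_left_mul_inr_right x, cs.length_eq_zero_iff.mp hx, map_one, one_mul]

theorem exists_simple_extLen_mul_lt {x : W ⋊[φ] Ω} (hx : extLen cs x ≠ 0) :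
    ∃ s, IsSimpleElt cs s ∧ extLen cs (s * x) < extLen cs x := by
  obtain ⟨i, hi⟩ := cs.exists_leftDescent_of_ne_one (w := x.left) fun h => hx (by simp [extLen, h])
  exact ⟨inl (cs.simple i), ⟨i, rfl⟩, by simpa [extLen, CoxeterSystem.IsLeftDescent] using hi⟩

theorem mem_subsemigroup_of_simple_of_inr {H : Type*} [Mul H] {T : W ⋊[φ] Ω → H}
    (hT : ∀ s x, IsSimpleElt cs s → extLen cs x < extLen cs (s * x) → T s * T x = T (s * x))
    {S : Subsemigroup H} (hS : ∀ s, IsSimpleElt cs s → T s ∈ S) (hΩ : ∀ τ, T (inr τ) ∈ S)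
    (x : W ⋊[φ] Ω) : T x ∈ S := by
  induction hn : extLen cs x using Nat.strong_induction_on generalizing x with
  | _ n ih =>
    by_cases hx : extLen cs x = 0
    · rw [eq_inr_of_extLen_eq_zero cs hx]
      exact hΩ _
    obtain ⟨s, hs, hlt⟩ := exists_simple_extLen_mul_lt cs hx
    have hsx : s * (s * x) = x := hs.involutive_mul_left x
    rw [← hsx, ← hT s (s * x) hs (by rwa [hsx])]
    exact S.mul_mem (hS s hs) (ih _ (hn ▸ hlt) _ rfl)

theorem mem_center_iff_commute_inr_and_simple {R A : Type*} [CommRing R] [Ring A]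
    [Algebra R A] (T : Module.Basis (W ⋊[φ] Ω) R A)
    (hT : ∀ s x, IsSimpleElt cs s → extLen cs x < extLen cs (s * x) → T s * T x = T (s * x))
    (h : A) :
    h ∈ Set.center A ↔ (∀ τ, Commute (T (inr τ)) h) ∧ ∀ s, IsSimpleElt cs s → Commute (T s) h := by
  refine ⟨fun hc => ⟨fun τ => Semigroup.mem_center_iff.mp hc _,
    fun s _ => Semigroup.mem_center_iff.mp hc _⟩,
    fun ⟨hΩ, hS⟩ => T.mem_center_of_commute h fun x => ?_⟩
  have mem_centralizer {y : A} : y ∈ Subsemigroup.centralizer {h} ↔ Commute y h := by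
    simp [Subsemigroup.mem_centralizer_iff, Commute, SemiconjBy, eq_comm]
  simp only [← mem_centralizer] at hΩ hS ⊢
  exact mem_subsemigroup_of_simple_of_inr cs hT hS hΩ x

end Coxeter

theorem statement11_general {B W Ω H : Type*} [Group W] [Group Ω] [Ring H] [Algebra ℂ H]
    {M : CoxeterMatrix B} (cs : CoxeterSystem M W) (φ : Ω →* MulAut W)
    (hφ : ∀ (τ : Ω) (i : B), ∃ j : B, φ τ (cs.simple i) = cs.simple j)
    (T : Module.Basis (W ⋊[φ] Ω) ℂ H)
    (q : W ⋊[φ] Ω → ℕ)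
    (hTleft : ∀ s x : W ⋊[φ] Ω, IsSimpleElt cs s →
      (extLen cs x < extLen cs (s * x) → T s * T x = T (s * x)) ∧
      (extLen cs (s * x) < extLen cs x →
        T s * T x = ((q s : ℂ) - 1) • T x + (q s : ℂ) • T (s * x)))
    (hTright : ∀ s x : W ⋊[φ] Ω, IsSimpleElt cs s →
      (extLen cs x < extLen cs (x * s) → T x * T s = T (x * s)) ∧
      (extLen cs (x * s) < extLen cs x →
        T x * T s = ((q s : ℂ) - 1) • T x + (q s : ℂ) • T (x * s)))
    (hTom : ∀ (τ : Ω) (x : W ⋊[φ] Ω),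
      T (SemidirectProduct.inr τ * x) = T (SemidirectProduct.inr τ) * T x ∧
      T (x * SemidirectProduct.inr τ) = T x * T (SemidirectProduct.inr τ))
    (h : H) :
    h ∈ Set.center H ↔
      ((∀ (x : W ⋊[φ] Ω) (τ : Ω),
          T.repr h (x * SemidirectProduct.inr τ) = T.repr h (SemidirectProduct.inr τ * x)) ∧
        ∀ x s : W ⋊[φ] Ω, IsSimpleElt cs s →
          ((extLen cs x < extLen cs (s * x) ∧ extLen cs x < extLen cs (x * s) →
              (q s : ℂ) * T.repr h (s * x) = (q s : ℂ) * T.repr h (x * s)) ∧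
            (extLen cs (x * s) < extLen cs x ∧ extLen cs x < extLen cs (s * x) →
              (q s : ℂ) * T.repr h (s * x) = T.repr h (x * s) + ((q s : ℂ) - 1) * T.repr h x) ∧
            (extLen cs (s * x) < extLen cs x ∧ extLen cs x < extLen cs (x * s) →
              T.repr h (s * x) + ((q s : ℂ) - 1) * T.repr h x = (q s : ℂ) * T.repr h (x * s)) ∧
            (extLen cs (s * x) < extLen cs x ∧ extLen cs (x * s) < extLen cs x →
              T.repr h (s * x) = T.repr h (x * s)))) := by
  have commute_inr_iff (τ : Ω) :=
    T.commute_iff_of_mul_basis (fun x => ((hTom τ x).1).symm) (fun x => ((hTom τ x).2).symm) h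
  have commute_simple_iff {s} (hs : IsSimpleElt cs s) :=
    T.commute_iff_of_isHeckeOperator (fun x => hTleft s x hs) hs.involutive_mul_left
      (extLen_simple_mul_ne cs hs) (fun x => hTright s x hs) hs.involutive_mul_right
      (extLen_mul_simple_ne cs hφ hs) h
  rw [mem_center_iff_commute_inr_and_simple cs T (fun s x hs => (hTleft s x hs).1),
    forall_comm (β := Ω)]
  exact and_congr (forall_congr' commute_inr_iff)
    ⟨fun H x s hs => ((commute_simple_iff hs).1 (H s hs)) x,
      fun H s hs => (commute_simple_iff hs).2 fun x => H x s hs⟩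

/-- the equations defining the center of the Hecke algebra. -/
theorem statement11 {B W Ω H : Type*} [Group W] [Group Ω] [Ring H] [Algebra ℂ H]
    {M : CoxeterMatrix B} (cs : CoxeterSystem M W) (φ : Ω →* MulAut W)
    (hφ : ∀ (τ : Ω) (i : B), ∃ j : B, φ τ (cs.simple i) = cs.simple j)
    (T : Module.Basis (W ⋊[φ] Ω) ℂ H)
    (q : W ⋊[φ] Ω → ℕ)
    (hq : ∀ s t : W ⋊[φ] Ω, IsSimpleElt cs s → IsSimpleElt cs t → IsConj s t → q s = q t)
    (hTleft : ∀ s x : W ⋊[φ] Ω, IsSimpleElt cs s →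
      (extLen cs x < extLen cs (s * x) → T s * T x = T (s * x)) ∧
      (extLen cs (s * x) < extLen cs x →
        T s * T x = ((q s : ℂ) - 1) • T x + (q s : ℂ) • T (s * x)))
    (hTright : ∀ s x : W ⋊[φ] Ω, IsSimpleElt cs s →
      (extLen cs x < extLen cs (x * s) → T x * T s = T (x * s)) ∧
      (extLen cs (x * s) < extLen cs x →
        T x * T s = ((q s : ℂ) - 1) • T x + (q s : ℂ) • T (x * s)))
    (hTom : ∀ (τ : Ω) (x : W ⋊[φ] Ω),
      T (SemidirectProduct.inr τ * x) = T (SemidirectProduct.inr τ) * T x ∧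
      T (x * SemidirectProduct.inr τ) = T x * T (SemidirectProduct.inr τ))
    (h : H) :
    h ∈ Set.center H ↔
      ((∀ (x : W ⋊[φ] Ω) (τ : Ω),
          T.repr h (x * SemidirectProduct.inr τ) = T.repr h (SemidirectProduct.inr τ * x)) ∧
        ∀ x s : W ⋊[φ] Ω, IsSimpleElt cs s →
          ((extLen cs x < extLen cs (s * x) ∧ extLen cs x < extLen cs (x * s) →
              (q s : ℂ) * T.repr h (s * x) = (q s : ℂ) * T.repr h (x * s)) ∧
            (extLen cs (x * s) < extLen cs x ∧ extLen cs x < extLen cs (s * x) →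
              (q s : ℂ) * T.repr h (s * x) = T.repr h (x * s) + ((q s : ℂ) - 1) * T.repr h x) ∧
            (extLen cs (s * x) < extLen cs x ∧ extLen cs x < extLen cs (x * s) →
              T.repr h (s * x) + ((q s : ℂ) - 1) * T.repr h x = (q s : ℂ) * T.repr h (x * s)) ∧
            (extLen cs (s * x) < extLen cs x ∧ extLen cs (x * s) < extLen cs x →
              T.repr h (s * x) = T.repr h (x * s)))) :=
  statement11_general cs φ hφ T q hTleft hTright hTom h
end
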